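/- In the cochain DG algebra B₆ (free algebra k⟨x₁,x₂⟩, ∂(x₁)=x₂², ∂(x₂)=0), the kernel of ∂ in degree 2 is the 2-dimensional space spanned by x₁x₂+x₂x₁ and x₂², and the image of ∂ from degree 1 is the line k·x₂²; consequently H²(B₆) is one-dimensional spanned by the class of x₁x₂+x₂x₁. -/

import Mathlib

/-- The degree-`i` homogeneous component of the free algebra `k⟨x_1,...,x_n⟩`
with all generators in degree `1`: the span of the words of length `i`. -/
noncomputable def deg (k : Type*) [CommRing k] (n : ℕ) (i : ℕ) :
    Submodule k (FreeAlgebra k (Fin n)) :=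
  Submodule.span k
    {w | ∃ f : Fin i → Fin n, w = (List.ofFn fun j => FreeAlgebra.ι k (f j)).prod}

/-- The first generator `x₁`. -/
noncomputable def X (k : Type*) [CommRing k] : FreeAlgebra k (Fin 2) := FreeAlgebra.ι k 0

/-- The second generator `x₂`. -/
noncomputable def Y (k : Type*) [CommRing k] : FreeAlgebra k (Fin 2) := FreeAlgebra.ι k 1

/-- The degree-2 cocycle `x₁x₂ + x₂x₁` of `B₆`. -/
noncomputable def Q (k : Type*) [CommRing k] : FreeAlgebra k (Fin 2) := X k * Y k + Y k * X k

/-!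
In the word basis `x₁², x₁x₂, x₂x₁, x₂²` of degree 2, the graded Leibniz rule gives
`∂(l₁x₁² + l₂x₁x₂ + l₃x₂x₁ + l₄x₂²) = l₁(x₂²x₁ − x₁x₂²) + (l₂ − l₃)x₂³`, and reading off the
coefficients of the words `x₂²x₁` and `x₂³` shows that this vanishes iff `l₁ = 0` and `l₂ = l₃`.
In degree 1, `∂(c₁x₁ + c₂x₂) = c₁x₂²`, so the coboundaries are the line through `x₂²`, which
does not contain `x₁x₂ + x₂x₁` (its coefficient on the word `x₁x₂` is `1`).
-/

open FreeAlgebra Submodule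

@[simp]
theorem FreeMonoid.of_mul_eq_of_mul_iff {α : Type*} {a b : α} {u v : FreeMonoid α} :
    of a * u = of b * v ↔ a = b ∧ u = v := by
  rw [← toList.injective.eq_iff, toList_of_mul, toList_of_mul, List.cons.injEq,
    toList.injective.eq_iff]

namespace FreeAlgebra

variable {R α : Type*} [CommSemiring R]

@[simp]
theorem equivMonoidAlgebraFreeMonoid_ι (x : α) :
    equivMonoidAlgebraFreeMonoid (ι R x) = MonoidAlgebra.of R (FreeMonoid α) (FreeMonoid.of x) := by
  simp [equivMonoidAlgebraFreeMonoid]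

theorem basisFreeMonoid_repr_apply (a : FreeAlgebra R α) (w : FreeMonoid α) :
    (basisFreeMonoid R α).repr a w = (equivMonoidAlgebraFreeMonoid a).coeff w :=
  rfl

end FreeAlgebra

section Leibniz

variable {R : Type*} [CommRing R] {n : ℕ}

theorem ι_mem_deg_one (i : Fin n) : ι R i ∈ deg R n 1 :=
  subset_span ⟨fun _ => i, by simp⟩

theorem map_ι_mul {d : FreeAlgebra R (Fin n) →ₗ[R] FreeAlgebra R (Fin n)}
    (hL : ∀ (p : ℕ) (a b : FreeAlgebra R (Fin n)), a ∈ deg R n p →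
      d (a * b) = d a * b + ((-1 : R) ^ p) • (a * d b))
    (i : Fin n) (b : FreeAlgebra R (Fin n)) :
    d (ι R i * b) = d (ι R i) * b - ι R i * d b := by
  rw [hL 1 _ b (ι_mem_deg_one i), pow_one, neg_one_smul, sub_eq_add_neg]

end Leibniz

section B6

variable {R : Type*} [CommRing R]

theorem deg_one_le_span : deg R 2 1 ≤ span R {X R, Y R} := by
  refine span_le.2 ?_
  rintro _ ⟨f, rfl⟩
  simp only [List.ofFn_succ, List.ofFn_zero, List.prod_cons, List.prod_nil, mul_one]
  generalize f 0 = i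
  fin_cases i <;> exact subset_span (by simp [X, Y])

theorem deg_two_le_span :
    deg R 2 2 ≤ span R {X R * X R, X R * Y R, Y R * X R, Y R * Y R} := by
  refine span_le.2 ?_
  rintro _ ⟨f, rfl⟩
  simp only [List.ofFn_succ, List.ofFn_zero, List.prod_cons, List.prod_nil, mul_one,
    Fin.succ_zero_eq_one]
  generalize f 0 = i, f 1 = j
  fin_cases i <;> fin_cases j <;> exact subset_span (by simp [X, Y])

theorem exists_eq_of_mem_deg_one {a : FreeAlgebra R (Fin 2)} (ha : a ∈ deg R 2 1) :
    ∃ c₁ c₂ : R, a = c₁ • X R + c₂ • Y R := by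
  obtain ⟨c₁, c₂, rfl⟩ := mem_span_pair.1 (deg_one_le_span ha)
  exact ⟨c₁, c₂, rfl⟩

theorem exists_eq_of_mem_deg_two {a : FreeAlgebra R (Fin 2)} (ha : a ∈ deg R 2 2) :
    ∃ l₁ l₂ l₃ l₄ : R,
      a = l₁ • (X R * X R) + l₂ • (X R * Y R) + l₃ • (Y R * X R) + l₄ • (Y R * Y R) := by
  obtain ⟨l₁, a₁, ha₁, rfl⟩ := mem_span_insert.1 (deg_two_le_span ha)
  obtain ⟨l₂, a₂, ha₂, rfl⟩ := mem_span_insert.1 ha₁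
  obtain ⟨l₃, a₃, ha₃, rfl⟩ := mem_span_insert.1 ha₂
  obtain ⟨l₄, rfl⟩ := mem_span_singleton.1 ha₃
  exact ⟨l₁, l₂, l₃, l₄, by abel⟩

theorem eq_zero_of_smul_add_smul_eq_zero {l m : R}
    (h : l • (Y R * Y R * X R - X R * (Y R * Y R)) + m • (Y R * Y R * Y R) = 0) :
    l = 0 ∧ m = 0 := by
  have coeff (w : FreeMonoid (Fin 2)) :=
    congrArg (fun a => (basisFreeMonoid R (Fin 2)).repr a w) h
  simp only [X, Y, basisFreeMonoid_repr_apply] at coeff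
  constructor
  · simpa [MonoidAlgebra.single_mul_single, Finsupp.single_apply, FreeMonoid.of_injective.eq_iff,
      mul_assoc] using coeff (.of 1 * .of 1 * .of 0)
  · simpa [MonoidAlgebra.single_mul_single, Finsupp.single_apply, FreeMonoid.of_injective.eq_iff,
      mul_assoc] using coeff (.of 1 * .of 1 * .of 1)

theorem Q_ne_smul_Y_mul_Y [Nontrivial R] (c : R) : Q R ≠ c • (Y R * Y R) := fun h => by
  simpa [Q, X, Y, basisFreeMonoid_repr_apply, MonoidAlgebra.single_mul_single,
    Finsupp.single_apply, FreeMonoid.of_injective.eq_iff] using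
    congrArg (fun a => (basisFreeMonoid R (Fin 2)).repr a (.of 0 * .of 1)) h

structure IsB6Differential (d : FreeAlgebra R (Fin 2) →ₗ[R] FreeAlgebra R (Fin 2)) : Prop where
  leibniz : ∀ (p : ℕ) (a b : FreeAlgebra R (Fin 2)), a ∈ deg R 2 p →
    d (a * b) = d a * b + ((-1 : R) ^ p) • (a * d b)
  map_X : d (X R) = Y R * Y R
  map_Y : d (Y R) = 0

namespace IsB6Differential

variable {d : FreeAlgebra R (Fin 2) →ₗ[R] FreeAlgebra R (Fin 2)}

theorem map_X_mul (hd : IsB6Differential d) (b : FreeAlgebra R (Fin 2)) :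
    d (X R * b) = Y R * Y R * b - X R * d b := by
  rw [← hd.map_X]
  exact map_ι_mul hd.leibniz 0 b

theorem map_Y_mul (hd : IsB6Differential d) (b : FreeAlgebra R (Fin 2)) :
    d (Y R * b) = -(Y R * d b) := by
  rw [Y, map_ι_mul hd.leibniz 1 b, ← Y, hd.map_Y, zero_mul, zero_sub]

theorem map_deg_two (hd : IsB6Differential d) (l₁ l₂ l₃ l₄ : R) :
    d (l₁ • (X R * X R) + l₂ • (X R * Y R) + l₃ • (Y R * X R) + l₄ • (Y R * Y R)) =
      l₁ • (Y R * Y R * X R - X R * (Y R * Y R)) + (l₂ - l₃) • (Y R * Y R * Y R) := by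
  simp only [map_add, map_smul, hd.map_X_mul, hd.map_Y_mul, hd.map_X, hd.map_Y, mul_zero,
    neg_zero, mul_assoc]
  module

theorem map_eq_zero_iff (hd : IsB6Differential d) {a : FreeAlgebra R (Fin 2)}
    (ha : a ∈ deg R 2 2) : d a = 0 ↔ ∃ c e : R, a = c • Q R + e • (Y R * Y R) := by
  constructor
  · intro h
    obtain ⟨l₁, l₂, l₃, l₄, rfl⟩ := exists_eq_of_mem_deg_two ha
    rw [hd.map_deg_two] at h
    obtain ⟨rfl, h₂₃⟩ := eq_zero_of_smul_add_smul_eq_zero h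
    obtain rfl := sub_eq_zero.1 h₂₃
    exact ⟨l₂, l₄, by rw [Q]; module⟩
  · rintro ⟨c, e, rfl⟩
    have hQ : c • Q R + e • (Y R * Y R) =
        (0 : R) • (X R * X R) + c • (X R * Y R) + c • (Y R * X R) + e • (Y R * Y R) := by
      rw [Q]; module
    rw [hQ, hd.map_deg_two, sub_self, zero_smul, zero_smul, add_zero]

theorem exists_map_eq_smul (hd : IsB6Differential d) {a : FreeAlgebra R (Fin 2)}
    (ha : a ∈ deg R 2 1) : ∃ c : R, d a = c • (Y R * Y R) := by
  obtain ⟨c₁, c₂, rfl⟩ := exists_eq_of_mem_deg_one ha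
  exact ⟨c₁, by rw [map_add, map_smul, map_smul, hd.map_X, hd.map_Y, smul_zero, add_zero]⟩

end IsB6Differential

end B6

theorem stmt12_general {k : Type*} [Field k]
    (d : FreeAlgebra k (Fin 2) →ₗ[k] FreeAlgebra k (Fin 2))
    (hL : ∀ (p : ℕ) (a b : FreeAlgebra k (Fin 2)), a ∈ deg k 2 p →
      d (a * b) = d a * b + ((-1 : k) ^ p) • (a * d b))
    (h1 : d (X k) = Y k * Y k)
    (h2 : d (Y k) = 0) :
    (∀ a ∈ deg k 2 2, (d a = 0 ↔ ∃ c e : k, a = c • Q k + e • (Y k * Y k))) ∧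
    (∀ a ∈ deg k 2 1, ∃ c : k, d a = c • (Y k * Y k)) ∧
    (∀ c : k, ∃ a ∈ deg k 2 1, d a = c • (Y k * Y k)) ∧
    (¬ ∃ b ∈ deg k 2 1, d b = Q k) ∧
    (∀ a ∈ deg k 2 2, d a = 0 →
      ∃ c : k, ∃ b ∈ deg k 2 1, a = c • Q k + d b) := by
  have hd : IsB6Differential d := ⟨hL, h1, h2⟩
  have hX : X k ∈ deg k 2 1 := ι_mem_deg_one 0
  refine ⟨fun a ha => hd.map_eq_zero_iff ha, fun a ha => hd.exists_map_eq_smul ha,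
    fun c => ⟨c • X k, smul_mem _ c hX, by rw [map_smul, h1]⟩, ?_, ?_⟩
  · rintro ⟨b, hb, hdb⟩
    obtain ⟨c, hc⟩ := hd.exists_map_eq_smul hb
    exact Q_ne_smul_Y_mul_Y c (hdb ▸ hc)
  · intro a ha hda
    obtain ⟨c, e, rfl⟩ := (hd.map_eq_zero_iff ha).1 hda
    exact ⟨c, e • X k, smul_mem _ e hX, by rw [map_smul, h1]⟩

/-- in `B₆` (`∂(x₁) = x₂²`, `∂(x₂) = 0`), the kernel of `∂`
in degree 2 is spanned by `x₁x₂+x₂x₁` and `x₂²`, the image of `∂` from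
degree 1 is the line `k·x₂²`, and consequently `H²(B₆)` is one-dimensional,
spanned by the class of `x₁x₂+x₂x₁`. -/
theorem stmt12 {k : Type*} [Field k] [CharZero k]
    (d : FreeAlgebra k (Fin 2) →ₗ[k] FreeAlgebra k (Fin 2))
    (hL : ∀ (p : ℕ) (a b : FreeAlgebra k (Fin 2)), a ∈ deg k 2 p →
      d (a * b) = d a * b + ((-1 : k) ^ p) • (a * d b))
    (h1 : d (X k) = Y k * Y k)
    (h2 : d (Y k) = 0)
    (hdd : ∀ x, d (d x) = 0) :
    (∀ a ∈ deg k 2 2, (d a = 0 ↔ ∃ c e : k, a = c • Q k + e • (Y k * Y k))) ∧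
    (∀ a ∈ deg k 2 1, ∃ c : k, d a = c • (Y k * Y k)) ∧
    (∀ c : k, ∃ a ∈ deg k 2 1, d a = c • (Y k * Y k)) ∧
    (¬ ∃ b ∈ deg k 2 1, d b = Q k) ∧
    (∀ a ∈ deg k 2 2, d a = 0 →
      ∃ c : k, ∃ b ∈ deg k 2 1, a = c • Q k + d b) :=
  stmt12_general d hL h1 h2
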